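/- arXiv:1703.10716 — 2 statements merged into one kernel-verified Lean document; each statement's English description precedes it below -/
import Mathlib

section
/- Let {X_n} be i.i.d. random variables and ρ₂ = sup{r ≥ 0 : liminf_{x→∞} x^r P(X > x) = 0}. Then liminf_{n→∞} (log max_{1≤k≤n} X_k)/(log n) = 1/ρ₂ almost surely, with conventions 1/0 = ∞ and 1/∞ = 0. -/
open MeasureTheory ProbabilityTheory Filter
open scoped ENNReal

/-- `log x = ln (e ∨ x)` as in the paper. -/
noncomputable def Log (x : ℝ) : ℝ := Real.log (max (Real.exp 1) x)

/-- `pmax X n ω = max_{1 ≤ k ≤ n} X_k(ω)` (indexed `0,…,n-1`), junk value at `n = 0`. -/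
noncomputable def pmax {Ω : Type*} (X : ℕ → Ω → ℝ) (n : ℕ) (ω : Ω) : ℝ :=
  if h : n = 0 then X 0 ω
  else (Finset.range n).sup' (Finset.nonempty_range_iff.mpr h) fun k => X k ω

/-!
Write `M n = max_{k < n} X_k` and `T r = liminf_{x → ∞} x ^ r P(X > x)`, so that
`ρ₂ = sup {r | T r = 0}`.

If `T q = 0` and `p < q`, pick `x_j → ∞` with `x_j ^ q P(X > x_j) < 2 ^ (-j)`. Along
`n_j = ⌊x_j ^ q⌋ ≥ x_j ^ p` the union bound gives `P(M n_j > x_j) < 2 ^ (-j)`, so by Borel–Cantelli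
`log M n / log n ≤ 1 / p` infinitely often.

If `T q > 0` and `q < p`, then `P(X > y) ≥ c y ^ (-q)` for large `y`, and independence gives
`P(M m ≤ m ^ (1 / p)) ≤ exp (-c m ^ (1 - q / p))`, which is summable; by Borel–Cantelli
`log M m / log m ≥ 1 / p` eventually. Letting `p` run through the rationals on either side of `ρ₂`
gives the claim.
-/

lemma eq_inv_of_rat_bounds {a L : ℝ≥0∞}
    (hlt : ∀ q : ℚ, 0 < (q : ℝ) → ENNReal.ofReal q < a → L ≤ (ENNReal.ofReal q)⁻¹)
    (hgt : ∀ q : ℚ, a < ENNReal.ofReal q → (ENNReal.ofReal q)⁻¹ ≤ L) : L = a⁻¹ := by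
  suffices h : L⁻¹ = a by rw [← h, inv_inv]
  refine le_antisymm (not_lt.1 fun h => ?_) (not_lt.1 fun h => ?_)
  · obtain ⟨q, -, haq, hqL⟩ := ENNReal.lt_iff_exists_rat_btwn.1 h
    exact (ENNReal.inv_le_iff_inv_le.1 (hgt q haq)).not_gt hqL
  · obtain ⟨q, -, hLq, hqa⟩ := ENNReal.lt_iff_exists_rat_btwn.1 h
    have hq : 0 < (q : ℝ) := ENNReal.ofReal_pos.1 (zero_le.trans_lt hLq)
    exact (ENNReal.le_inv_iff_le_inv.1 (hlt q hq hqa)).not_gt hLq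

lemma exists_seq_tendsto_atTop_lt_of_liminf_eq_zero {f : ℝ → ℝ≥0∞} (hf : liminf f atTop = 0)
    {b : ℕ → ℝ≥0∞} (hb : ∀ j, 0 < b j) :
    ∃ x : ℕ → ℝ, Tendsto x atTop atTop ∧ ∀ j, f (x j) < b j := by
  have h : ∀ j : ℕ, ∃ x, (j : ℝ) ≤ x ∧ f x < b j := fun j =>
    ((eventually_ge_atTop (j : ℝ)).and_frequently
      (frequently_lt_of_liminf_lt (by isBoundedDefault) (hf ▸ hb j))).exists
  choose x hjx hx using h
  exact ⟨x, tendsto_atTop_mono hjx tendsto_natCast_atTop_atTop, hx⟩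

lemma rpow_le_floor_rpow {x p q : ℝ} (hx : 0 < x) (hxp : 1 ≤ x ^ p) (hqp : 2 ≤ x ^ (q - p)) :
    x ^ p ≤ ⌊x ^ q⌋₊ := by
  have hsplit : x ^ q = x ^ p * x ^ (q - p) := by rw [← Real.rpow_add hx, add_sub_cancel]
  have := Nat.sub_one_lt_floor (x ^ q)
  nlinarith

lemma Real.summable_exp_neg_mul_rpow {c ε : ℝ} (hc : 0 < c) (hε : 0 < ε) :
    Summable fun m : ℕ => Real.exp (-(c * (m : ℝ) ^ ε)) := by
  have hlittle := (isLittleO_exp_neg_mul_rpow_atTop hc (-2 / ε)).comp_tendsto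
    ((tendsto_rpow_atTop hε).comp tendsto_natCast_atTop_atTop)
  refine summable_of_isBigO_nat (Real.summable_nat_rpow.2 (by norm_num : (-2 : ℝ) < -1)) ?_
  refine (hlittle.isBigO.congr_left fun m => by simp [neg_mul]).congr_right fun m => ?_
  simp only [Function.comp_apply]
  rw [← Real.rpow_mul m.cast_nonneg, mul_div_cancel₀ _ hε.ne']

lemma ae_eventually_notMem_of_summable {α : Type*} [MeasurableSpace α] {μ : Measure α}
    [IsFiniteMeasure μ] {s : ℕ → Set α} {b : ℕ → ℝ} (hb : Summable b)
    (hs : ∀ᶠ n in atTop, μ.real (s n) ≤ b n) : ∀ᵐ x ∂μ, ∀ᶠ n in atTop, x ∉ s n := by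
  have hsum : Summable fun n => μ.real (s n) :=
    hb.of_norm_bounded_eventually_nat (by simpa only [Real.norm_of_nonneg measureReal_nonneg])
  have hμ : ∀ n, μ (s n) = ENNReal.ofReal (μ.real (s n)) := fun n => (ofReal_measureReal).symm
  refine ae_eventually_notMem ?_
  rw [tsum_congr hμ, ← ENNReal.ofReal_tsum_of_nonneg (fun _ => measureReal_nonneg) hsum]
  exact ENNReal.ofReal_ne_top

lemma Real.log_pos_of_exp_one_le {x : ℝ} (hx : Real.exp 1 ≤ x) : 0 < Real.log x :=
  Real.log_pos ((Real.one_lt_exp_iff.2 one_pos).trans_le hx)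

lemma Log_eq_log {x : ℝ} (hx : Real.exp 1 ≤ x) : Log x = Real.log x := by
  rw [Log, max_eq_right hx]

lemma Log_monotone : Monotone Log := fun _ _ h =>
  Real.log_le_log (lt_max_of_lt_left (Real.exp_pos 1)) (max_le_max le_rfl h)

lemma Log_div_Log_le_inv {p a x n : ℝ} (hp : 0 < p) (hx : Real.exp 1 ≤ x)
    (hxp : Real.exp 1 ≤ x ^ p) (ha : a ≤ x) (hn : x ^ p ≤ n) : Log a / Log n ≤ p⁻¹ := by
  have hx0 : 0 < x := (Real.exp_pos 1).trans_le hx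
  have hlog : 0 < Real.log x := Real.log_pos_of_exp_one_le hx
  have hnum : Log a ≤ Real.log x := (Log_monotone ha).trans_eq (Log_eq_log hx)
  have hden : p * Real.log x ≤ Log n := by
    rw [← Real.log_rpow hx0, ← Log_eq_log hxp]
    exact Log_monotone hn
  calc Log a / Log n ≤ Real.log x / (p * Real.log x) :=
        div_le_div₀ hlog.le hnum (by positivity) hden
    _ = p⁻¹ := by field_simp

lemma inv_le_Log_div_Log {p a m : ℝ} (hm : Real.exp 1 ≤ m)
    (hmp : Real.exp 1 ≤ m ^ p⁻¹) (ha : m ^ p⁻¹ ≤ a) : p⁻¹ ≤ Log a / Log m := by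
  have hm0 : 0 < m := (Real.exp_pos 1).trans_le hm
  have hnum : p⁻¹ * Real.log m ≤ Log a := by
    rw [← Real.log_rpow hm0, ← Log_eq_log hmp]
    exact Log_monotone ha
  rwa [Log_eq_log hm, le_div_iff₀ (Real.log_pos_of_exp_one_le hm)]

lemma pmax_le_iff {Ω : Type*} {X : ℕ → Ω → ℝ} {n : ℕ} (hn : n ≠ 0) {ω : Ω} {x : ℝ} :
    pmax X n ω ≤ x ↔ ∀ k < n, X k ω ≤ x := by
  simp [pmax, hn, Finset.sup'_le_iff]

noncomputable def logMaxRatio {Ω : Type*} (X : ℕ → Ω → ℝ) (ω : Ω) (n : ℕ) : ℝ :=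
  Log (pmax X n ω) / Log n

section Tail

variable {Ω : Type*} [MeasurableSpace Ω] {μ : Measure Ω}

noncomputable def tailLiminf (μ : Measure Ω) (Y : Ω → ℝ) (r : ℝ) : ℝ≥0∞ :=
  liminf (fun x : ℝ => ENNReal.ofReal (x ^ r) * μ {ω | Y ω > x}) atTop

noncomputable def tailIndex (μ : Measure Ω) (Y : Ω → ℝ) : ℝ≥0∞ :=
  sSup (ENNReal.ofReal '' {r : ℝ | 0 ≤ r ∧ tailLiminf μ Y r = 0})

lemma exists_gt_tailLiminf_eq_zero {Y : Ω → ℝ} {p : ℝ} (h : ENNReal.ofReal p < tailIndex μ Y) :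
    ∃ q > p, tailLiminf μ Y q = 0 := by
  obtain ⟨_, ⟨q, ⟨-, hq⟩, rfl⟩, hpq⟩ := lt_sSup_iff.1 h
  exact ⟨q, (ENNReal.ofReal_lt_ofReal_iff'.1 hpq).1, hq⟩

lemma exists_lt_tailLiminf_ne_zero {Y : Ω → ℝ} {p : ℝ} (h : tailIndex μ Y < ENNReal.ofReal p) :
    ∃ q < p, tailLiminf μ Y q ≠ 0 := by
  obtain ⟨q, hq0, hq, hqp⟩ := ENNReal.lt_iff_exists_real_btwn.1 h
  exact ⟨q, (ENNReal.ofReal_lt_ofReal_iff'.1 hqp).1,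
    fun h0 => hq.not_ge (le_sSup ⟨q, ⟨hq0, h0⟩, rfl⟩)⟩

lemma exists_pos_le_of_tailLiminf_ne_zero [IsFiniteMeasure μ] {Y : Ω → ℝ} {q : ℝ}
    (hT : tailLiminf μ Y q ≠ 0) : ∃ c > 0, ∀ᶠ y in atTop, c ≤ y ^ q * μ.real {ω | Y ω > y} := by
  obtain ⟨c, -, hc0, hcT⟩ := ENNReal.lt_iff_exists_real_btwn.1 (pos_iff_ne_zero.2 hT)
  refine ⟨c, ENNReal.ofReal_pos.1 hc0, ?_⟩
  filter_upwards [eventually_lt_of_lt_liminf hcT, eventually_ge_atTop 0] with y hy hy0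
  rw [← ofReal_measureReal, ← ENNReal.ofReal_mul (Real.rpow_nonneg hy0 q)] at hy
  exact (ENNReal.ofReal_lt_ofReal_iff'.1 hy).1.le

end Tail

section IID

variable {Ω : Type*} [MeasurableSpace Ω] {μ : Measure Ω} {X : ℕ → Ω → ℝ}

lemma measure_lt_pmax_le (hident : ∀ n, IdentDistrib (X n) (X 0) μ μ) {n : ℕ} (hn : n ≠ 0)
    (x : ℝ) : μ {ω | x < pmax X n ω} ≤ n * μ {ω | X 0 ω > x} := by
  have hsub : {ω | x < pmax X n ω} ⊆ ⋃ k ∈ Finset.range n, X k ⁻¹' Set.Ioi x := by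
    intro ω hω
    by_contra h
    simp only [Set.mem_iUnion, Set.mem_preimage, Set.mem_Ioi, Finset.mem_range, not_exists,
      not_lt] at h
    exact (not_le.2 hω) ((pmax_le_iff hn).2 h)
  calc μ {ω | x < pmax X n ω} ≤ ∑ k ∈ Finset.range n, μ (X k ⁻¹' Set.Ioi x) :=
        (measure_mono hsub).trans (measure_biUnion_finset_le _ _)
    _ = n * μ {ω | X 0 ω > x} := by
        rw [Finset.sum_congr rfl fun k _ => (hident k).measure_mem_eq measurableSet_Ioi,
          Finset.sum_const, Finset.card_range, nsmul_eq_mul]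
        rfl

lemma measure_pmax_le_eq_pow (hindep : iIndepFun X μ)
    (hident : ∀ n, IdentDistrib (X n) (X 0) μ μ) {n : ℕ} (hn : n ≠ 0) (y : ℝ) :
    μ {ω | pmax X n ω ≤ y} = μ {ω | X 0 ω ≤ y} ^ n := by
  have hinter : {ω | pmax X n ω ≤ y} = ⋂ k ∈ Finset.range n, X k ⁻¹' Set.Iic y := by
    ext ω
    simp [pmax_le_iff hn]
  rw [hinter, hindep.meas_biInter fun k _ => ⟨Set.Iic y, measurableSet_Iic, rfl⟩,
    Finset.prod_congr rfl fun k _ => (hident k).measure_mem_eq measurableSet_Iic,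
    Finset.prod_const, Finset.card_range]
  rfl

lemma measureReal_pmax_le_le_exp [IsProbabilityMeasure μ] (hindep : iIndepFun X μ)
    (hident : ∀ n, IdentDistrib (X n) (X 0) μ μ) {n : ℕ} (hn : n ≠ 0) (y : ℝ) :
    μ.real {ω | pmax X n ω ≤ y} ≤ Real.exp (-(n * μ.real {ω | X 0 ω > y})) := by
  have hcompl : μ.real {ω | X 0 ω ≤ y} = 1 - μ.real {ω | X 0 ω > y} := by
    convert probReal_compl_eq_one_sub₀
      ((hident 0).aemeasurable_snd.nullMeasurable (measurableSet_Ioi (a := y))) using 2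
    · ext ω
      simp
    · rfl
  rw [measureReal_def, measure_pmax_le_eq_pow hindep hident hn, ENNReal.toReal_pow,
    ← measureReal_def, hcompl, neg_mul_eq_mul_neg, Real.exp_nat_mul]
  exact pow_le_pow_left₀ (sub_nonneg.2 measureReal_le_one)
    (by linarith [Real.add_one_le_exp (-μ.real {ω | X 0 ω > y})]) n

theorem ae_liminf_logMaxRatio_le_inv [IsProbabilityMeasure μ]
    (hident : ∀ n, IdentDistrib (X n) (X 0) μ μ) {p : ℝ} (hp : 0 < p)
    (hpρ : ENNReal.ofReal p < tailIndex μ (X 0)) :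
    ∀ᵐ ω ∂μ, liminf (fun n => ENNReal.ofReal (logMaxRatio X ω n)) atTop ≤ (ENNReal.ofReal p)⁻¹ := by
  obtain ⟨q, hpq, hT⟩ := exists_gt_tailLiminf_eq_zero hpρ
  obtain ⟨x, hx, hxT⟩ := exists_seq_tendsto_atTop_lt_of_liminf_eq_zero hT
    (b := fun j => ENNReal.ofReal ((1 / 2) ^ j)) fun j => ENNReal.ofReal_pos.2 (by positivity)
  set n : ℕ → ℕ := fun j => ⌊x j ^ q⌋₊
  have hgood : ∀ᶠ j in atTop, Real.exp 1 ≤ x j ∧ Real.exp 1 ≤ x j ^ p ∧ x j ^ p ≤ n j := by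
    filter_upwards [hx.eventually_ge_atTop (Real.exp 1),
      ((tendsto_rpow_atTop hp).comp hx).eventually_ge_atTop (Real.exp 1),
      ((tendsto_rpow_atTop (sub_pos.2 hpq)).comp hx).eventually_ge_atTop 2] with j h1 h2 h3
    exact ⟨h1, h2, rpow_le_floor_rpow ((Real.exp_pos 1).trans_le h1)
      ((Real.one_le_exp zero_le_one).trans h2) h3⟩
  have hBC : ∀ᵐ ω ∂μ, ∀ᶠ j in atTop, ω ∉ {ω | x j < pmax X (n j) ω} := by
    refine ae_eventually_notMem_of_summable summable_geometric_two ?_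
    filter_upwards [hgood] with j ⟨h1, h2, h3⟩
    have hx0 : 0 < x j := (Real.exp_pos 1).trans_le h1
    have hn0 : n j ≠ 0 := by
      rw [← Nat.cast_ne_zero (R := ℝ)]
      exact ((Real.exp_pos 1).trans_le (h2.trans h3)).ne'
    refine ENNReal.toReal_le_of_le_ofReal (by positivity) ?_
    calc μ {ω | x j < pmax X (n j) ω} ≤ n j * μ {ω | X 0 ω > x j} :=
          measure_lt_pmax_le hident hn0 _
      _ ≤ ENNReal.ofReal (x j ^ q) * μ {ω | X 0 ω > x j} := by
          gcongr
          rw [← ENNReal.ofReal_natCast]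
          exact ENNReal.ofReal_le_ofReal (Nat.floor_le (by positivity))
      _ ≤ ENNReal.ofReal ((1 / 2) ^ j) := (hxT j).le
  have hn : Tendsto n atTop atTop :=
    tendsto_nat_floor_atTop.comp ((tendsto_rpow_atTop (hp.trans hpq)).comp hx)
  filter_upwards [hBC] with ω hω
  refine liminf_le_of_frequently_le' (hn.frequently (Eventually.frequently ?_))
  filter_upwards [hω, hgood] with j hj ⟨h1, h2, h3⟩
  rw [← ENNReal.ofReal_inv_of_pos hp]
  exact ENNReal.ofReal_le_ofReal (Log_div_Log_le_inv hp h1 h2 (not_lt.1 hj) h3)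

theorem ae_inv_le_liminf_logMaxRatio [IsProbabilityMeasure μ] (hindep : iIndepFun X μ)
    (hident : ∀ n, IdentDistrib (X n) (X 0) μ μ) {p : ℝ}
    (hρp : tailIndex μ (X 0) < ENNReal.ofReal p) :
    ∀ᵐ ω ∂μ, (ENNReal.ofReal p)⁻¹ ≤ liminf (fun n => ENNReal.ofReal (logMaxRatio X ω n)) atTop := by
  have hp : 0 < p := ENNReal.ofReal_pos.1 (zero_le.trans_lt hρp)
  obtain ⟨q, hqp, hT⟩ := exists_lt_tailLiminf_ne_zero hρp
  obtain ⟨c, hc, hcT⟩ := exists_pos_le_of_tailLiminf_ne_zero hT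
  have hε : 0 < 1 - q / p := by rwa [sub_pos, div_lt_one hp]
  have hm : Tendsto (fun m : ℕ => (m : ℝ)) atTop atTop := tendsto_natCast_atTop_atTop
  have hmp : Tendsto (fun m : ℕ => (m : ℝ) ^ p⁻¹) atTop atTop :=
    (tendsto_rpow_atTop (inv_pos.2 hp)).comp hm
  have hBC : ∀ᵐ ω ∂μ, ∀ᶠ m in atTop, ω ∉ {ω | pmax X m ω ≤ (m : ℝ) ^ p⁻¹} := by
    refine ae_eventually_notMem_of_summable (Real.summable_exp_neg_mul_rpow hc hε) ?_
    filter_upwards [hmp.eventually hcT, eventually_gt_atTop 0] with m hmT hm0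
    refine (measureReal_pmax_le_le_exp hindep hident hm0.ne' _).trans
      (Real.exp_le_exp.2 (neg_le_neg ?_))
    have hm0' : (0 : ℝ) < m := Nat.cast_pos.2 hm0
    rw [← Real.rpow_mul hm0'.le, inv_mul_eq_div] at hmT
    rw [Real.rpow_sub hm0', Real.rpow_one, mul_div_assoc', div_le_iff₀ (by positivity)]
    nlinarith [mul_le_mul_of_nonneg_right hmT hm0'.le]
  filter_upwards [hBC] with ω hω
  refine le_liminf_of_le (by isBoundedDefault) ?_
  filter_upwards [hω, hm.eventually_ge_atTop (Real.exp 1),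
    hmp.eventually_ge_atTop (Real.exp 1)] with m hm h1 h2
  rw [← ENNReal.ofReal_inv_of_pos hp]
  exact ENNReal.ofReal_le_ofReal (inv_le_Log_div_Log h1 h2 (not_le.1 hm).le)

end IID

theorem stmt6_general {Ω : Type*} [MeasurableSpace Ω] (μ : Measure Ω) [IsProbabilityMeasure μ]
    (X : ℕ → Ω → ℝ)
    (hindep : iIndepFun X μ)
    (hident : ∀ n, IdentDistrib (X n) (X 0) μ μ)
    (ρ₂ : ℝ≥0∞)
    (hρ₂ : ρ₂ = sSup (ENNReal.ofReal '' {r : ℝ | 0 ≤ r ∧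
        Filter.liminf (fun x : ℝ => ENNReal.ofReal (x ^ r) * μ {ω | X 0 ω > x}) atTop = 0})) :
    ∀ᵐ ω ∂μ,
      Filter.liminf (fun n : ℕ => ENNReal.ofReal (Log (pmax X n ω) / Log n)) atTop = ρ₂⁻¹ := by
  obtain rfl : ρ₂ = tailIndex μ (X 0) := hρ₂
  have hlt : ∀ q : ℚ, ∀ᵐ ω ∂μ, 0 < (q : ℝ) → ENNReal.ofReal q < tailIndex μ (X 0) →
      liminf (fun n => ENNReal.ofReal (logMaxRatio X ω n)) atTop ≤ (ENNReal.ofReal q)⁻¹ :=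
    fun q => eventually_imp_distrib_left.2 fun hq =>
      eventually_imp_distrib_left.2 (ae_liminf_logMaxRatio_le_inv hident hq)
  have hgt : ∀ q : ℚ, ∀ᵐ ω ∂μ, tailIndex μ (X 0) < ENNReal.ofReal q →
      (ENNReal.ofReal q)⁻¹ ≤ liminf (fun n => ENNReal.ofReal (logMaxRatio X ω n)) atTop :=
    fun q => eventually_imp_distrib_left.2 (ae_inv_le_liminf_logMaxRatio hindep hident)
  filter_upwards [ae_all_iff.2 hlt, ae_all_iff.2 hgt] with ω hltω hgtω
  exact eq_inv_of_rat_bounds hltω hgtω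

theorem stmt6 {Ω : Type*} [MeasurableSpace Ω] (μ : Measure Ω) [IsProbabilityMeasure μ]
    (X : ℕ → Ω → ℝ) (hmeas : ∀ n, Measurable (X n))
    (hindep : iIndepFun X μ)
    (hident : ∀ n, IdentDistrib (X n) (X 0) μ μ)
    (ρ₂ : ℝ≥0∞)
    (hρ₂ : ρ₂ = sSup (ENNReal.ofReal '' {r : ℝ | 0 ≤ r ∧
        Filter.liminf (fun x : ℝ => ENNReal.ofReal (x ^ r) * μ {ω | X 0 ω > x}) atTop = 0})) :
    ∀ᵐ ω ∂μ,
      Filter.liminf (fun n : ℕ => ENNReal.ofReal (Log (pmax X n ω) / Log n)) atTop = ρ₂⁻¹ :=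
  stmt6_general μ X hindep hident ρ₂ hρ₂
end

section
/- Let {X_n} be i.i.d. random variables such that (log max_{1≤k≤n} X_k)/(log n) →_P 1/ρ for some 0 < ρ < ∞. Then for every x > 0, (ln P((log max_{1≤k≤n} X_k)/(log n) ≥ 1/ρ + x))/(ln n) → −ρx as n → ∞. -/
open MeasureTheory ProbabilityTheory Filter
open scoped ENNReal

/-! With `F̄ t = P(X ≥ t)`, independence gives `P(M_n ≥ t) = 1 - (1 - F̄ t) ^ n`, which lies
between `min (n F̄ t) 1 / 2` and `n F̄ t`; for large `n` the event `Log M_n / Log n ≥ a` is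
`M_n ≥ n ^ a`. Convergence in probability to `1/ρ` therefore forces `n F̄ (n ^ a) < 1` for
`a > 1/ρ` and `n F̄ (n ^ b) > 1/2` for `b < 1/ρ`, and monotonicity of `F̄` (interpolating at
`⌊t ^ (1/a)⌋` and `⌈t ^ (1/b)⌉`) turns this into `log F̄ t / log t → -ρ`. For `a = 1/ρ + x` the
probability `P(M_n ≥ n ^ a)` is then within a factor `2` of `n F̄ (n ^ a)`, whose logarithm
divided by `log n` tends to `1 - ρ a = -ρ x`. -/

open Real

lemma one_sub_one_sub_pow_le {p : ℝ} (hp : p ≤ 2) (n : ℕ) : 1 - (1 - p) ^ n ≤ n * p := by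
  have := one_add_mul_le_pow (a := -p) (by linarith) n
  rw [← sub_eq_add_neg] at this
  linarith

lemma exp_neg_le_one_sub_half {s : ℝ} (hs₀ : 0 ≤ s) (hs₁ : s ≤ 1) : exp (-s) ≤ 1 - s / 2 := by
  have hexp : exp (-1) ≤ 1 / 2 := by
    rw [exp_neg, inv_le_comm₀ (exp_pos 1) (by norm_num)]
    linarith [add_one_le_exp (1 : ℝ)]
  -- `exp` lies below its chord on `[-1, 0]`
  have hconv := convexOn_exp.2 (Set.mem_univ 0) (Set.mem_univ (-1)) (sub_nonneg.2 hs₁) hs₀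
    (by ring)
  simp only [smul_eq_mul, mul_zero, mul_neg, mul_one, zero_add, exp_zero] at hconv
  nlinarith

lemma min_div_two_le_one_sub_one_sub_pow {p : ℝ} (hp₀ : 0 ≤ p) (hp₁ : p ≤ 1) (n : ℕ) :
    min (n * p) 1 / 2 ≤ 1 - (1 - p) ^ n := by
  have hs : 0 ≤ min (n * p) 1 := le_min (by positivity) zero_le_one
  calc min (n * p) 1 / 2 ≤ 1 - exp (-min (n * p) 1) := by
        linarith [exp_neg_le_one_sub_half hs (min_le_right _ _)]
    _ ≤ 1 - exp (-(n * p)) := by gcongr; exact min_le_left _ _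
    _ ≤ 1 - (1 - p) ^ n := by
        have h := pow_le_pow_left₀ (sub_nonneg.2 hp₁) (one_sub_le_exp_neg p) n
        rw [← exp_nat_mul, mul_neg] at h
        linarith

lemma setOf_pmax_lt {Ω : Type*} {X : ℕ → Ω → ℝ} {n : ℕ} (hn : n ≠ 0) (a : ℝ) :
    {ω | pmax X n ω < a} = ⋂ k ∈ Finset.range n, X k ⁻¹' Set.Iio a := by
  ext ω
  simp [pmax, hn, Finset.sup'_lt_iff]

section MaximumLaw

variable {Ω : Type*} [MeasurableSpace Ω] {μ : Measure Ω} [IsProbabilityMeasure μ]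
  {X : ℕ → Ω → ℝ}

lemma measureReal_pmax_lt (hmeas : ∀ n, Measurable (X n)) (hindep : iIndepFun X μ)
    (hident : ∀ n, IdentDistrib (X n) (X 0) μ μ) {n : ℕ} (hn : n ≠ 0) (a : ℝ) :
    μ.real {ω | pmax X n ω < a} = (1 - μ.real {ω | a ≤ X 0 ω}) ^ n := by
  have hprod := hindep.meas_biInter (S := Finset.range n)
    (fun k _ => ⟨Set.Iio a, measurableSet_Iio, rfl⟩)
  have hsame (k : ℕ) : μ (X k ⁻¹' Set.Iio a) = μ (X 0 ⁻¹' Set.Iio a) :=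
    (hident k).measure_mem_eq measurableSet_Iio
  have hcompl : {ω | a ≤ X 0 ω} = (X 0 ⁻¹' Set.Iio a)ᶜ := by ext; simp
  rw [measureReal_def, setOf_pmax_lt hn, hprod, hcompl,
    probReal_compl_eq_one_sub (hmeas 0 measurableSet_Iio), sub_sub_cancel]
  simp only [hsame, Finset.prod_const, Finset.card_range, ENNReal.toReal_pow]
  rfl

lemma measureReal_le_pmax (hmeas : ∀ n, Measurable (X n)) (hindep : iIndepFun X μ)
    (hident : ∀ n, IdentDistrib (X n) (X 0) μ μ) {n : ℕ} (hn : n ≠ 0) (a : ℝ) :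
    μ.real {ω | a ≤ pmax X n ω} = 1 - (1 - μ.real {ω | a ≤ X 0 ω}) ^ n := by
  have hmax : MeasurableSet {ω | pmax X n ω < a} := by
    rw [setOf_pmax_lt hn]
    exact .biInter (Finset.range n).countable_toSet fun k _ => hmeas k measurableSet_Iio
  have hcompl : {ω | a ≤ pmax X n ω} = {ω | pmax X n ω < a}ᶜ := by ext; simp
  rw [hcompl, probReal_compl_eq_one_sub hmax, measureReal_pmax_lt hmeas hindep hident hn]

end MaximumLaw

lemma Log_of_exp_one_le {x : ℝ} (hx : exp 1 ≤ x) : Log x = log x := by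
  rw [Log, max_eq_right hx]

lemma le_Log_div_Log_iff {t c y : ℝ} (ht : exp 1 ≤ t) (hc : 1 < c * log t) :
    c ≤ Log y / Log t ↔ t ^ c ≤ y := by
  have ht₀ : 0 < t := (exp_pos 1).trans_le ht
  have hlog : 0 < log t := log_pos (by linarith [add_one_le_exp (1 : ℝ)])
  rw [Log_of_exp_one_le ht, le_div_iff₀ hlog, Log, le_log_iff_exp_le (by positivity),
    rpow_def_of_pos ht₀, mul_comm, le_max_iff, or_iff_right]
  rw [exp_le_exp]
  linarith

lemma eventually_le_Log_div_Log_iff {c : ℝ} (hc : 0 < c) :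
    ∀ᶠ n : ℕ in atTop, ∀ y, c ≤ Log y / Log n ↔ (n : ℝ) ^ c ≤ y := by
  have hlog := tendsto_log_atTop.comp tendsto_natCast_atTop_atTop
  filter_upwards [tendsto_natCast_atTop_atTop.eventually_ge_atTop (exp 1),
    ((hlog.const_mul_atTop hc).eventually_gt_atTop 1)] with n hn hcn y
  exact le_Log_div_Log_iff hn hcn

section ConvergenceInProbability

variable {Ω ι : Type*} [MeasurableSpace Ω] {μ : Measure Ω} [IsFiniteMeasure μ] {l : Filter ι}
  {f : ι → Ω → ℝ} {c : ℝ}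

lemma tendsto_measureReal_setOf_le_of_lt
    (h : ∀ ε, 0 < ε → Tendsto (fun i => μ {ω | ε ≤ |f i ω - c|}) l (nhds 0)) {a : ℝ}
    (ha : c < a) : Tendsto (fun i => μ.real {ω | a ≤ f i ω}) l (nhds 0) := by
  have hdev := (ENNReal.tendsto_toReal ENNReal.zero_ne_top).comp (h (a - c) (sub_pos.2 ha))
  refine squeeze_zero (fun _ => measureReal_nonneg) (fun i => measureReal_mono ?_) hdev
  intro ω (hω : a ≤ f i ω)
  exact le_abs.2 (Or.inl (by linarith : a - c ≤ f i ω - c))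

lemma tendsto_measureReal_setOf_lt_of_lt
    (h : ∀ ε, 0 < ε → Tendsto (fun i => μ {ω | ε ≤ |f i ω - c|}) l (nhds 0)) {b : ℝ}
    (hb : b < c) : Tendsto (fun i => μ.real {ω | f i ω < b}) l (nhds 0) := by
  have hdev := (ENNReal.tendsto_toReal ENNReal.zero_ne_top).comp (h (c - b) (sub_pos.2 hb))
  refine squeeze_zero (fun _ => measureReal_nonneg) (fun i => measureReal_mono ?_) hdev
  intro ω (hω : f i ω < b)
  exact le_abs.2 (Or.inr (by linarith : c - b ≤ -(f i ω - c)))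

end ConvergenceInProbability

lemma antitone_measureReal_setOf_le {Ω : Type*} [MeasurableSpace Ω] {μ : Measure Ω}
    [IsFiniteMeasure μ] (Y : Ω → ℝ) : Antitone fun t => μ.real {ω | t ≤ Y ω} :=
  fun _ _ hst => measureReal_mono fun _ h => hst.trans h

section TailIndex

variable {g : ℝ → ℝ}

lemma eventually_le_two_mul_rpow_neg (hg : Antitone g) {a : ℝ} (ha : 0 < a)
    (h : ∀ᶠ m : ℕ in atTop, m * g (m ^ a) < 1) :
    ∀ᶠ t in atTop, g t ≤ 2 * t ^ (-a⁻¹) := by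
  obtain ⟨N, hN⟩ := eventually_atTop.1 h
  have hr := tendsto_rpow_atTop (inv_pos.2 ha)
  filter_upwards [(tendsto_nat_floor_atTop.comp hr).eventually_ge_atTop N,
    hr.eventually_ge_atTop 2, eventually_gt_atTop 0] with t hmN hr2 ht
  set r := t ^ a⁻¹
  set m := ⌊r⌋₊
  have hmr : (m : ℝ) ≤ r := Nat.floor_le (by positivity)
  have hrm : r / 2 ≤ m := by linarith [Nat.sub_one_lt_floor r]
  have hm : (0 : ℝ) < m := by linarith
  have hmt : (m : ℝ) ^ a ≤ t := by
    calc (m : ℝ) ^ a ≤ r ^ a := by gcongr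
      _ = t := rpow_inv_rpow ht.le ha.ne'
  have hgm : g (m ^ a) < 1 / m := by rw [lt_div_iff₀ hm, mul_comm]; exact hN m hmN
  calc g t ≤ g (m ^ a) := hg hmt
    _ ≤ 1 / m := hgm.le
    _ ≤ 2 * t ^ (-a⁻¹) := by
        rw [rpow_neg ht.le, div_le_iff₀ hm]
        have : r * r⁻¹ = 1 := mul_inv_cancel₀ (by positivity)
        nlinarith [inv_pos.2 (show 0 < r by positivity)]

lemma eventually_rpow_neg_le_four_mul (hg : Antitone g) {b : ℝ} (hb : 0 < b)
    (h : ∀ᶠ m : ℕ in atTop, 1 / 2 < m * g (m ^ b)) :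
    ∀ᶠ t in atTop, t ^ (-b⁻¹) ≤ 4 * g t := by
  obtain ⟨N, hN⟩ := eventually_atTop.1 h
  have hr := tendsto_rpow_atTop (inv_pos.2 hb)
  filter_upwards [(tendsto_nat_ceil_atTop.comp hr).eventually_ge_atTop N,
    hr.eventually_ge_atTop 1, eventually_gt_atTop 0] with t hmN hr1 ht
  set r := t ^ b⁻¹
  set m := ⌈r⌉₊
  have hrm : r ≤ m := Nat.le_ceil r
  have hmr : (m : ℝ) ≤ 2 * r := by linarith [Nat.ceil_lt_add_one (show 0 ≤ r by positivity)]
  have htm : t ≤ (m : ℝ) ^ b := by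
    calc t = r ^ b := (rpow_inv_rpow ht.le hb.ne').symm
      _ ≤ (m : ℝ) ^ b := by gcongr
  have hgm := (hN m hmN).trans_le (mul_le_mul_of_nonneg_left (hg htm) m.cast_nonneg)
  have hgt : 0 < g t := pos_of_mul_pos_right (one_half_pos.trans hgm) m.cast_nonneg
  rw [rpow_neg ht.le, inv_le_iff_one_le_mul₀ (by positivity)]
  nlinarith

lemma eventually_pos_of_half_lt_natCast_mul (hg : Antitone g) {b : ℝ} (hb : 0 < b)
    (h : ∀ᶠ m : ℕ in atTop, 1 / 2 < m * g (m ^ b)) : ∀ᶠ t in atTop, 0 < g t := by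
  filter_upwards [eventually_rpow_neg_le_four_mul hg hb h, eventually_gt_atTop 0] with t h ht
  have := rpow_pos_of_pos ht (-b⁻¹)
  linarith

end TailIndex

lemma log_div_log_le_of_le_mul_rpow_neg {y C β t : ℝ} (hy : 0 < y) (ht : 1 < t)
    (h : y ≤ C * t ^ (-β)) : log y / log t ≤ log C / log t - β := by
  have htβ : 0 < t ^ (-β) := rpow_pos_of_pos (by linarith) _
  have hC : 0 < C := pos_of_mul_pos_left (hy.trans_le h) htβ.le
  have hlog := log_le_log hy h
  rw [log_mul hC.ne' htβ.ne', log_rpow (by linarith)] at hlog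
  rw [div_sub' (log_pos ht).ne', div_le_div_iff_of_pos_right (log_pos ht)]
  linarith

lemma le_log_div_log_of_rpow_neg_le_mul {y C β t : ℝ} (hC : 0 < C) (ht : 1 < t)
    (h : t ^ (-β) ≤ C * y) : -β - log C / log t ≤ log y / log t := by
  have htβ : 0 < t ^ (-β) := rpow_pos_of_pos (by linarith) _
  have hy : 0 < y := pos_of_mul_pos_right (htβ.trans_le h) hC.le
  have hlog := log_le_log htβ h
  rw [log_mul hC.ne' hy.ne', log_rpow (by linarith)] at hlog
  rw [sub_div' (log_pos ht).ne', div_le_div_iff_of_pos_right (log_pos ht)]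
  linarith

lemma tendsto_log_div_log_of_tail_bounds {g : ℝ → ℝ} (hg : Antitone g) {c : ℝ} (hc : 0 < c)
    (hup : ∀ a, c < a → ∀ᶠ m : ℕ in atTop, m * g (m ^ a) < 1)
    (hlow : ∀ b, 0 < b → b < c → ∀ᶠ m : ℕ in atTop, 1 / 2 < m * g (m ^ b)) :
    Tendsto (fun t => log (g t) / log t) atTop (nhds (-c⁻¹)) := by
  obtain ⟨ρ, hρ, rfl⟩ : ∃ ρ, 0 < ρ ∧ c = ρ⁻¹ := ⟨c⁻¹, inv_pos.2 hc, (inv_inv c).symm⟩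
  rw [inv_inv]
  have hvanish (C : ℝ) : Tendsto (fun t => log C / log t) atTop (nhds 0) :=
    tendsto_const_nhds.div_atTop tendsto_log_atTop
  rw [tendsto_order]
  constructor
  · intro a' ha'
    obtain ⟨β, hρβ, hβa'⟩ := exists_between (lt_neg.1 ha')
    have hβ : 0 < β := hρ.trans hρβ
    have hlim : Tendsto (fun t => -β - log 4 / log t) atTop (nhds (-β)) := by
      simpa using (hvanish 4).const_sub (-β)
    filter_upwards [hlim.eventually_const_lt (lt_neg.1 hβa'),
      eventually_rpow_neg_le_four_mul hg (inv_pos.2 hβ)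
        (hlow _ (inv_pos.2 hβ) ((inv_lt_inv₀ hβ hρ).2 hρβ)),
      eventually_gt_atTop 1] with t hlt hbound ht
    rw [inv_inv] at hbound
    exact hlt.trans_le (le_log_div_log_of_rpow_neg_le_mul four_pos ht hbound)
  · intro a' ha'
    obtain ⟨β, hβ, hβρ⟩ := exists_between (max_lt hρ (neg_lt.1 ha'))
    rw [max_lt_iff, neg_lt] at hβ
    have hlim : Tendsto (fun t => log 2 / log t - β) atTop (nhds (-β)) := by
      simpa using (hvanish 2).sub_const β
    filter_upwards [hlim.eventually_lt_const hβ.2,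
      eventually_le_two_mul_rpow_neg hg (inv_pos.2 hβ.1)
        (hup _ ((inv_lt_inv₀ hρ hβ.1).2 hβρ)),
      eventually_pos_of_half_lt_natCast_mul hg (half_pos (inv_pos.2 hρ))
        (hlow _ (half_pos (inv_pos.2 hρ)) (half_lt_self (inv_pos.2 hρ))),
      eventually_gt_atTop 1] with t hlt hbound hpos ht
    rw [inv_inv] at hbound
    exact (log_div_log_le_of_le_mul_rpow_neg hpos ht hbound).trans_lt hlt

lemma tendsto_log_comp_rpow_div_log {g : ℝ → ℝ} {L c : ℝ} (hc : 0 < c)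
    (h : Tendsto (fun t => log (g t) / log t) atTop (nhds L)) :
    Tendsto (fun n : ℕ => log (g (n ^ c)) / log n) atTop (nhds (c * L)) := by
  have hpow := (tendsto_rpow_atTop hc).comp tendsto_natCast_atTop_atTop
  refine ((h.comp hpow).const_mul c).congr' ?_
  filter_upwards [eventually_gt_atTop 0] with n hn
  simp only [Function.comp_apply]
  rw [log_rpow (Nat.cast_pos.2 hn), ← mul_div_assoc, mul_div_mul_left _ _ hc.ne']

lemma tendsto_log_div_of_le_of_le_mul {α : Type*} {l : Filter α} {u v h : α → ℝ} {K L : ℝ}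
    (hK : 0 < K) (hh : Tendsto h l atTop) (hu : ∀ᶠ x in l, 0 < u x)
    (hvu : ∀ᶠ x in l, v x ≤ u x) (huv : ∀ᶠ x in l, u x ≤ K * v x)
    (hlim : Tendsto (fun x => log (u x) / h x) l (nhds L)) :
    Tendsto (fun x => log (v x) / h x) l (nhds L) := by
  have hlower : Tendsto (fun x => log (u x) / h x - log K / h x) l (nhds L) := by
    simpa using hlim.sub (tendsto_const_nhds.div_atTop hh)
  have hv : ∀ᶠ x in l, 0 < v x := by
    filter_upwards [hu, huv] with x hux huvx
    exact pos_of_mul_pos_right (hux.trans_le huvx) hK.le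
  refine tendsto_of_tendsto_of_tendsto_of_le_of_le' hlower hlim ?_ ?_ <;>
    filter_upwards [hu, hv, hvu, huv, hh.eventually_gt_atTop 0] with x hux hvx hvux huvx hx
  · have := log_le_log hux huvx
    rw [log_mul hK.ne' hvx.ne'] at this
    rw [← sub_div]
    gcongr
    linarith
  · gcongr

lemma tendsto_log_natCast_mul_div_log {p : ℕ → ℝ} {L : ℝ} (hp : ∀ᶠ n in atTop, 0 < p n)
    (h : Tendsto (fun n : ℕ => log (p n) / log n) atTop (nhds L)) :
    Tendsto (fun n : ℕ => log (n * p n) / log n) atTop (nhds (1 + L)) := by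
  refine (tendsto_const_nhds.add h).congr' ?_
  filter_upwards [hp, eventually_gt_atTop 1] with n hpn hn
  have hlog : log n ≠ 0 := (log_pos (Nat.one_lt_cast.2 hn)).ne'
  rw [log_mul (by positivity) hpn.ne', add_div, div_self hlog]

section TailOfX

variable {Ω : Type*} [MeasurableSpace Ω] {μ : Measure Ω} [IsProbabilityMeasure μ]
  {X : ℕ → Ω → ℝ} (hmeas : ∀ n, Measurable (X n)) (hindep : iIndepFun X μ)
  (hident : ∀ n, IdentDistrib (X n) (X 0) μ μ) {c : ℝ}
  (hconv : ∀ ε, 0 < ε →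
    Tendsto (fun n : ℕ => μ {ω | ε ≤ |Log (pmax X n ω) / Log n - c|}) atTop (nhds 0))
include hmeas hindep hident hconv

lemma eventually_natCast_mul_tail_lt_one {a : ℝ} (ha₀ : 0 < a) (ha : c < a) :
    ∀ᶠ m : ℕ in atTop, m * μ.real {ω | (m : ℝ) ^ a ≤ X 0 ω} < 1 := by
  filter_upwards [(tendsto_measureReal_setOf_le_of_lt hconv ha).eventually_lt_const one_half_pos,
    eventually_le_Log_div_Log_iff ha₀, eventually_ne_atTop 0] with m hm hiff hm₀
  simp only [hiff, measureReal_le_pmax hmeas hindep hident hm₀] at hm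
  have := min_div_two_le_one_sub_one_sub_pow measureReal_nonneg measureReal_le_one m
    (p := μ.real {ω | (m : ℝ) ^ a ≤ X 0 ω})
  simpa using (show min (m * μ.real {ω | (m : ℝ) ^ a ≤ X 0 ω}) 1 < 1 by linarith)

lemma eventually_half_lt_natCast_mul_tail {b : ℝ} (hb₀ : 0 < b) (hb : b < c) :
    ∀ᶠ m : ℕ in atTop, 1 / 2 < m * μ.real {ω | (m : ℝ) ^ b ≤ X 0 ω} := by
  filter_upwards [(tendsto_measureReal_setOf_lt_of_lt hconv hb).eventually_lt_const one_half_pos,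
    eventually_le_Log_div_Log_iff hb₀, eventually_ne_atTop 0] with m hm hiff hm₀
  have hset : {ω | Log (pmax X m ω) / Log m < b} = {ω | pmax X m ω < (m : ℝ) ^ b} := by
    ext ω
    exact not_le.symm.trans ((hiff _).not.trans not_le)
  rw [hset, measureReal_pmax_lt hmeas hindep hident hm₀] at hm
  linarith [one_sub_one_sub_pow_le (measureReal_le_one.trans one_le_two) m
    (p := μ.real {ω | (m : ℝ) ^ b ≤ X 0 ω})]

lemma eventually_measureReal_tail_pos (hc : 0 < c) :
    ∀ᶠ t in atTop, 0 < μ.real {ω | t ≤ X 0 ω} :=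
  eventually_pos_of_half_lt_natCast_mul (antitone_measureReal_setOf_le _) (half_pos hc)
    (eventually_half_lt_natCast_mul_tail hmeas hindep hident hconv (half_pos hc)
      (half_lt_self hc))

lemma tendsto_log_tail_div_log (hc : 0 < c) :
    Tendsto (fun t => log (μ.real {ω | t ≤ X 0 ω}) / log t) atTop (nhds (-c⁻¹)) :=
  tendsto_log_div_log_of_tail_bounds (antitone_measureReal_setOf_le _) hc
    (fun _ ha => eventually_natCast_mul_tail_lt_one hmeas hindep hident hconv (hc.trans ha) ha)
    (fun _ hb₀ hb => eventually_half_lt_natCast_mul_tail hmeas hindep hident hconv hb₀ hb)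

end TailOfX

theorem stmt11 {Ω : Type*} [MeasurableSpace Ω] (μ : Measure Ω) [IsProbabilityMeasure μ]
    (X : ℕ → Ω → ℝ) (hmeas : ∀ n, Measurable (X n))
    (hindep : iIndepFun X μ)
    (hident : ∀ n, IdentDistrib (X n) (X 0) μ μ)
    (ρ : ℝ) (hρ : 0 < ρ)
    (hconv : ∀ ε : ℝ, 0 < ε →
        Tendsto (fun n : ℕ => μ {ω | ε ≤ |Log (pmax X n ω) / Log n - 1 / ρ|}) atTop (nhds 0)) :
    ∀ x : ℝ, 0 < x →
      Tendsto (fun n : ℕ =>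
          Real.log ((μ {ω | 1 / ρ + x ≤ Log (pmax X n ω) / Log n}).toReal) / Real.log n)
        atTop (nhds (-(ρ * x))) := by
  intro x hx
  simp only [one_div] at hconv ⊢
  set a := ρ⁻¹ + x
  have ha : 0 < a := by positivity
  set p : ℕ → ℝ := fun n => μ.real {ω | (n : ℝ) ^ a ≤ X 0 ω}
  have hp_pos : ∀ᶠ n in atTop, 0 < p n :=
    ((tendsto_rpow_atTop ha).comp tendsto_natCast_atTop_atTop).eventually
      (eventually_measureReal_tail_pos hmeas hindep hident hconv (inv_pos.2 hρ))
  have hp_small := eventually_natCast_mul_tail_lt_one hmeas hindep hident hconv ha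
    (lt_add_of_pos_right _ hx)
  have hlaw : ∀ᶠ n : ℕ in atTop,
      (μ {ω | a ≤ Log (pmax X n ω) / Log n}).toReal = 1 - (1 - p n) ^ n := by
    filter_upwards [eventually_le_Log_div_Log_iff ha, eventually_ne_atTop 0] with n hiff hn
    simp only [hiff]
    exact measureReal_le_pmax hmeas hindep hident hn _
  have hlim := tendsto_log_natCast_mul_div_log hp_pos <| tendsto_log_comp_rpow_div_log ha
    (tendsto_log_tail_div_log hmeas hindep hident hconv (inv_pos.2 hρ))
  rw [inv_inv, show 1 + a * -ρ = -(ρ * x) by simp only [a]; field_simp; ring] at hlim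
  refine tendsto_log_div_of_le_of_le_mul two_pos
    (tendsto_log_atTop.comp tendsto_natCast_atTop_atTop) ?_ ?_ ?_ hlim
  · filter_upwards [hp_pos, eventually_gt_atTop 0] with n hpn hn
    exact mul_pos (Nat.cast_pos.2 hn) hpn
  · filter_upwards [hlaw] with n hn
    rw [hn]
    exact one_sub_one_sub_pow_le (measureReal_le_one.trans one_le_two) n
  · filter_upwards [hlaw, hp_small] with n hn hsmall
    rw [hn, ← div_le_iff₀' two_pos, ← min_eq_left hsmall.le]
    exact min_div_two_le_one_sub_one_sub_pow measureReal_nonneg measureReal_le_one n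
end
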